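/- Fix integers K ≥ 2 and T ≥ 1 and a nonempty subset C ⊆ [K]. Let Ω = {p ∈ Δ(K) : p_i ≥ 1/(|C|·T) for all i ∈ C, and p_i = 0 for all i ∉ C}. Let p̃_1 be the uniform distribution on C, let ℓ̃_1, …, ℓ̃_T ∈ ℝ^K be nonnegative vectors, define η_t = 1/√(1 + Σ_{τ=1}^t Σ_{i=1}^K p̃_{τ,i}·ℓ̃_{τ,i}²) and ψ_t(p) = (1/η_t)·Σ_{i∈C} p_i ln p_i, and for each t let p̃_{t+1} be a minimizer over Ω of p ↦ ⟨p, ℓ̃_t⟩ + D_{ψ_t}(p, p̃_t). Let ρ = max{1, max_{t∈[T], i∈C} ℓ̃_{t,i}}. Then for every i ∈ C: Σ_{t=1}^T ⟨p̃_t − e_i, ℓ̃_t⟩ ≤ 25·ρ·ln²(KT) + 10·ln(KT)·√(ρ·Σ_{t=1}^T ℓ̃_{t,i}). -/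

import Mathlib

open Finset

/-- Bregman divergence `D_ψ(x,y) = ψ(x) − ψ(y) − ⟨∇ψ(y), x − y⟩`. -/
noncomputable def breg {K : ℕ} (ψ : (Fin K → ℝ) → ℝ) (x y : Fin K → ℝ) : ℝ :=
  ψ x - ψ y - fderiv ℝ ψ y (x - y)

/-!
Compare `p_t` with the smoothed expert `q = (1 - 1/T) e_i + (1/T) · unif(C)`, which lies in `Ω`
and loses at most `ρ` more than `e_i` over the `T` rounds. First-order optimality of `p_{t+1}`
on the convex set `Ω`, the three-point identity for relative entropy and
`e^{-a} ≤ 1 - a + a²/2` give, per round,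
`⟨p_t - q, ℓ_t⟩ ≤ (KL(q ‖ p_t) - KL(q ‖ p_{t+1})) / η_t + (η_t / 2) ∑ᵢ p_{t,i} ℓ_{t,i}²`.
Since `1/η_t` increases and `KL(q ‖ p_t) ≤ log (|C| T)`, the first terms telescope to at most
`log (|C| T) / η_T`, while `∑ a_t / √(1 + A_t) ≤ 2 √(1 + A_T)` bounds the second. As
`A_T ≤ ρ ∑_t ⟨p_t, ℓ_t⟩`, the regret `R` against `e_i` satisfies
`R ≤ (log (|C| T) + 1) √(1 + ρ (R + L)) + ρ` with `L = ∑_t ℓ_{t,i}`, a quadratic inequality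
in `√R`.
-/

open Real

section Scalar

lemma exp_neg_le_one_sub_add_sq_div_two {a : ℝ} (ha : 0 ≤ a) :
    exp (-a) ≤ 1 - a + a ^ 2 / 2 := by
  have hpos : 0 < 1 - a + a ^ 2 / 2 := by nlinarith [sq_nonneg (a - 1)]
  rw [exp_neg, inv_le_iff_one_le_mul₀ (exp_pos a)]
  nlinarith [mul_le_mul_of_nonneg_left (quadratic_le_exp_of_nonneg ha) hpos.le,
    sq_nonneg (a ^ 2), sq_nonneg a]

lemma mul_log_div_le_sub {x z : ℝ} (hx : 0 < x) (hz : 0 < z) : x * log (z / x) ≤ z - x := by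
  have h := mul_le_mul_of_nonneg_left (log_le_sub_one_of_pos (div_pos hz hx)) hx.le
  rwa [mul_sub, mul_div_cancel₀ _ hx.ne', mul_one] at h

lemma mul_sub_le_mul_log_div_add {x y a : ℝ} (hx : 0 < x) (hy : 0 < y) (ha : 0 ≤ a) :
    a * (y - x) ≤ x * log (x / y) + a ^ 2 / 2 * y + (y - x) := by
  have hz : 0 < y * exp (-a) := mul_pos hy (exp_pos _)
  have h := mul_log_div_le_sub hx hz
  rw [log_div hz.ne' hx.ne', log_mul hy.ne' (exp_pos _).ne', log_exp] at h
  rw [log_div hx.ne' hy.ne']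
  nlinarith [mul_le_mul_of_nonneg_left (exp_neg_le_one_sub_add_sq_div_two ha) hy.le]

lemma sqrt_one_add_add_le {x y : ℝ} (hx : 0 ≤ x) (hy : 0 ≤ y) :
    √(1 + (x + y)) ≤ 1 + √x + √y := by
  rw [sqrt_le_left (by positivity)]
  nlinarith [sq_sqrt hx, sq_sqrt hy, sqrt_nonneg x, sqrt_nonneg y,
    mul_nonneg (sqrt_nonneg x) (sqrt_nonneg y)]

lemma le_of_le_mul_sqrt_add {R L ρ b : ℝ} (hL : 0 ≤ L) (hρ : 1 ≤ ρ) (hb : 1 ≤ b)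
    (hR : R ≤ b * √(1 + ρ * (R + L)) + ρ) :
    R ≤ ρ * (b ^ 2 + 2 * b + 2) + 2 * b * √(ρ * L) := by
  have hu := sqrt_nonneg (ρ * L)
  rcases le_or_gt R 0 with hR0 | hR0
  · nlinarith
  set u := √(ρ * L)
  set s := √(ρ * R)
  have hs2 : s ^ 2 = ρ * R := sq_sqrt (by positivity)
  have hsqrt : √(1 + ρ * (R + L)) ≤ 1 + u + s := by
    rw [mul_add, add_comm (ρ * R)]
    exact sqrt_one_add_add_le (by positivity) (by positivity)
  have hlin : R ≤ b * (1 + u + s) + ρ := hR.trans (by gcongr)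
  -- `ρ · hlin` reads `s² ≤ ρ b s + ρ b (1 + u) + ρ²`; complete the square with `(s - ρ b)² ≥ 0`
  have hquad : ρ * R ≤ (ρ * b) ^ 2 + 2 * (ρ * b * (1 + u) + ρ ^ 2) := by
    nlinarith [mul_le_mul_of_nonneg_left hlin (by positivity : (0 : ℝ) ≤ ρ),
      sq_nonneg (s - ρ * b)]
  have hρ0 : 0 < ρ := by positivity
  have : R ≤ ρ * b ^ 2 + 2 * b * (1 + u) + 2 * ρ := by
    refine le_of_mul_le_mul_left ?_ hρ0
    nlinarith
  nlinarith

lemma le_of_le_add_one_mul_sqrt_add {R L ρ B ℒ : ℝ} (hL : 0 ≤ L) (hρ : 1 ≤ ρ) (hB : 0 ≤ B)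
    (hBℒ : B ≤ ℒ) (hℒ : 2 / 3 ≤ ℒ) (hR : R ≤ (B + 1) * √(1 + ρ * (R + L)) + ρ) :
    R ≤ 25 * ρ * ℒ ^ 2 + 10 * ℒ * √(ρ * L) := by
  have h := le_of_le_mul_sqrt_add hL hρ (by linarith) hR
  have hb : (B + 1) ^ 2 + 2 * (B + 1) + 2 ≤ 25 * ℒ ^ 2 := by nlinarith
  have hu := sqrt_nonneg (ρ * L)
  nlinarith [mul_le_mul_of_nonneg_left hb (by positivity : (0 : ℝ) ≤ ρ)]

lemma two_div_three_le_log {x : ℝ} (hx : 2 ≤ x) : 2 / 3 ≤ log x := by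
  linarith [log_two_gt_d9, log_le_log two_pos hx]

lemma le_sSup_of_mem_finset {α β : Type*} {s : Finset α} {u : Finset β} (f : α → β → ℝ)
    {a : α} {b : β} (ha : a ∈ s) (hb : b ∈ u) :
    f a b ≤ sSup {x | ∃ a ∈ s, ∃ b ∈ u, x = f a b} := by
  refine le_csSup (Set.Finite.bddAbove ?_) ⟨a, ha, b, hb, rfl⟩
  refine ((s ×ˢ u).finite_toSet.image fun c => f c.1 c.2).subset ?_
  rintro _ ⟨a, ha, b, hb, rfl⟩
  exact ⟨(a, b), by simp [ha, hb], rfl⟩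

end Scalar

section Sequences

lemma forall_mem_Icc_one_add_one {P : ℕ → Prop} {n : ℕ} (h1 : P 1)
    (h : ∀ t ∈ Icc 1 n, P (t + 1)) : ∀ t ∈ Icc 1 (n + 1), P t := by
  intro t ht
  rcases eq_or_ne t 1 with rfl | ht1
  · exact h1
  · obtain ⟨s, rfl⟩ : ∃ s, t = s + 1 := Nat.exists_eq_add_one.2 (by simp at ht; omega)
    exact h s (by simp at ht ⊢; omega)

lemma sum_mul_sub_succ_le {c D : ℕ → ℝ} {B : ℝ} {n : ℕ} (hn : 1 ≤ n) (hc1 : 0 ≤ c 1)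
    (hc : MonotoneOn c (Icc 1 n)) (hD : ∀ t ∈ Icc 1 n, D t ≤ B) :
    ∑ t ∈ Icc 1 n, c t * (D t - D (t + 1)) ≤ c n * (B - D (n + 1)) := by
  induction n, hn using Nat.le_induction with
  | base => simpa using mul_le_mul_of_nonneg_left (by simpa using hD 1) hc1
  | succ m hm ih =>
    have hmono : c m ≤ c (m + 1) := hc (by simp; omega) (by simp) (by omega)
    have hDm : D (m + 1) ≤ B := hD (m + 1) (by simp)
    rw [sum_Icc_succ_top (by omega)]
    have := ih (hc.mono (Icc_subset_Icc le_rfl (by omega)))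
      (fun t ht => hD t (Icc_subset_Icc le_rfl (by omega) ht))
    nlinarith [mul_le_mul_of_nonneg_right hmono (sub_nonneg.2 hDm)]

lemma sum_div_sqrt_one_add_sum_le {a : ℕ → ℝ} {n : ℕ} (ha : ∀ t ∈ Icc 1 n, 0 ≤ a t) :
    ∑ t ∈ Icc 1 n, a t / √(1 + ∑ τ ∈ Icc 1 t, a τ) ≤ 2 * (√(1 + ∑ t ∈ Icc 1 n, a t) - 1) := by
  induction n with
  | zero => simp
  | succ m ih =>
    have hA : 0 ≤ ∑ τ ∈ Icc 1 m, a τ := sum_nonneg fun τ hτ => ha τ (by simp at hτ ⊢; omega)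
    have ham : 0 ≤ a (m + 1) := ha (m + 1) (by simp)
    rw [sum_Icc_succ_top (by omega), sum_Icc_succ_top (by omega)]
    set v := √(1 + ∑ τ ∈ Icc 1 m, a τ)
    set u := √(1 + (∑ τ ∈ Icc 1 m, a τ + a (m + 1)))
    have hv2 : v ^ 2 = 1 + ∑ τ ∈ Icc 1 m, a τ := sq_sqrt (by positivity)
    have hu2 : u ^ 2 = 1 + (∑ τ ∈ Icc 1 m, a τ + a (m + 1)) := sq_sqrt (by positivity)
    have hv : 0 < v := sqrt_pos.2 (by positivity)
    have hvu : v ≤ u := sqrt_le_sqrt (by linarith)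
    have hstep : a (m + 1) / u ≤ 2 * (u - v) := by
      rw [div_le_iff₀ (hv.trans_le hvu)]
      nlinarith [sq_nonneg (u - v)]
    linarith [ih fun t ht => ha t (Icc_subset_Icc le_rfl (by omega) ht)]

lemma sum_le_of_adaptive_rate {r D a η : ℕ → ℝ} {B : ℝ} {n : ℕ} (hn : 1 ≤ n)
    (ha : ∀ t ∈ Icc 1 n, 0 ≤ a t) (hD : ∀ t ∈ Icc 1 (n + 1), D t ∈ Set.Icc 0 B)
    (hη : ∀ t, η t = 1 / √(1 + ∑ τ ∈ Icc 1 t, a τ))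
    (hr : ∀ t ∈ Icc 1 n, r t ≤ (D t - D (t + 1)) / η t + η t / 2 * a t) :
    ∑ t ∈ Icc 1 n, r t ≤ (B + 1) * √(1 + ∑ t ∈ Icc 1 n, a t) := by
  set c : ℕ → ℝ := fun t => √(1 + ∑ τ ∈ Icc 1 t, a τ)
  have hr' : ∀ t ∈ Icc 1 n, r t ≤ c t * (D t - D (t + 1)) + a t / c t / 2 := by
    intro t ht
    convert hr t ht using 2 <;> simp only [hη, c] <;> field_simp
  have hc : MonotoneOn c (Icc 1 n) := by
    intro s hs t ht hst
    refine sqrt_le_sqrt (add_le_add_right (sum_le_sum_of_subset_of_nonneg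
      (Icc_subset_Icc le_rfl hst) fun τ hτ _ => ha τ ?_) 1)
    simp only [mem_coe, mem_Icc] at hτ ht ⊢; omega
  have htel := sum_mul_sub_succ_le hn (sqrt_nonneg _) hc
    fun t ht => (hD t (Icc_subset_Icc le_rfl (by omega) ht)).2
  have hloc := sum_div_sqrt_one_add_sum_le ha
  have hDn := (hD (n + 1) (by simp)).1
  calc ∑ t ∈ Icc 1 n, r t
      ≤ ∑ t ∈ Icc 1 n, c t * (D t - D (t + 1)) + (∑ t ∈ Icc 1 n, a t / c t) / 2 := by
        rw [sum_div, ← sum_add_distrib]; exact sum_le_sum hr'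
    _ ≤ (B + 1) * c n := by nlinarith [sqrt_nonneg (1 + ∑ t ∈ Icc 1 n, a t)]

end Sequences

section RelativeEntropy

variable {ι : Type*} (s : Finset ι)

noncomputable def relEntropy (x y : ι → ℝ) : ℝ := ∑ i ∈ s, x i * log (x i / y i)

variable {s} {x y q : ι → ℝ}

lemma relEntropy_nonneg (hx : ∀ i ∈ s, 0 < x i) (hy : ∀ i ∈ s, 0 < y i)
    (hsx : ∑ i ∈ s, x i = 1) (hsy : ∑ i ∈ s, y i = 1) : 0 ≤ relEntropy s x y := by
  have h : ∑ i ∈ s, x i * log (y i / x i) ≤ ∑ i ∈ s, (y i - x i) :=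
    sum_le_sum fun i hi => mul_log_div_le_sub (hx i hi) (hy i hi)
  rw [sum_sub_distrib, hsx, hsy, sub_self] at h
  have e : ∀ i ∈ s, x i * log (x i / y i) = -(x i * log (y i / x i)) := fun i hi => by
    rw [← mul_neg, ← log_inv, inv_div]
  rw [relEntropy, sum_congr rfl e, sum_neg_distrib]
  linarith

lemma relEntropy_le_log_inv {ε : ℝ} (hε : 0 < ε) (hx : ∀ i ∈ s, 0 < x i)
    (hsx : ∑ i ∈ s, x i = 1) (hy : ∀ i ∈ s, ε ≤ y i) : relEntropy s x y ≤ log ε⁻¹ := by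
  calc relEntropy s x y ≤ ∑ i ∈ s, x i * log ε⁻¹ := by
        refine sum_le_sum fun i hi => mul_le_mul_of_nonneg_left ?_ (hx i hi).le
        have hx1 : x i ≤ 1 := hsx ▸ single_le_sum (fun j hj => (hx j hj).le) hi
        rw [log_div (hx i hi).ne' (hε.trans_le (hy i hi)).ne', log_inv]
        linarith [log_nonpos (hx i hi).le hx1, log_le_log hε (hy i hi)]
    _ = log ε⁻¹ := by rw [← sum_mul, hsx, one_mul]

lemma relEntropy_sub_relEntropy_sub_relEntropy (hq : ∀ i ∈ s, 0 < q i)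
    (hx : ∀ i ∈ s, 0 < x i) (hy : ∀ i ∈ s, 0 < y i) :
    relEntropy s q y - relEntropy s q x - relEntropy s x y
      = ∑ i ∈ s, (q i - x i) * (log (x i) - log (y i)) := by
  simp only [relEntropy, ← sum_sub_distrib]
  refine sum_congr rfl fun i hi => ?_
  rw [log_div (hq i hi).ne' (hy i hi).ne', log_div (hq i hi).ne' (hx i hi).ne',
    log_div (hx i hi).ne' (hy i hi).ne']
  ring

lemma sum_mul_sub_sum_mul_le_relEntropy_div_add {η : ℝ} (hη : 0 < η) {ℓ : ι → ℝ}
    (hℓ : ∀ i ∈ s, 0 ≤ ℓ i) (hx : ∀ i ∈ s, 0 < x i) (hy : ∀ i ∈ s, 0 < y i)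
    (hsx : ∑ i ∈ s, x i = 1) (hsy : ∑ i ∈ s, y i = 1) :
    ∑ i ∈ s, y i * ℓ i - ∑ i ∈ s, x i * ℓ i
      ≤ relEntropy s x y / η + η / 2 * ∑ i ∈ s, y i * ℓ i ^ 2 := by
  have h := sum_le_sum fun i hi =>
    mul_sub_le_mul_log_div_add (hx i hi) (hy i hi) (mul_nonneg hη.le (hℓ i hi))
  simp only [sum_add_distrib, sum_sub_distrib, hsx, hsy, sub_self, add_zero] at h
  have e1 : ∑ i ∈ s, η * ℓ i * (y i - x i) = η * (∑ i ∈ s, y i * ℓ i - ∑ i ∈ s, x i * ℓ i) := by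
    rw [mul_sub, mul_sum, mul_sum, ← sum_sub_distrib]
    exact sum_congr rfl fun i _ => by ring
  have e2 : ∑ i ∈ s, (η * ℓ i) ^ 2 / 2 * y i = η * (η / 2 * ∑ i ∈ s, y i * ℓ i ^ 2) := by
    rw [mul_sum, mul_sum]
    exact sum_congr rfl fun i _ => by ring
  rw [e1, e2] at h
  rw [div_add' _ _ _ hη.ne', le_div_iff₀ hη]
  rw [relEntropy]
  linarith

end RelativeEntropy

section ClippedSimplex

variable {ι : Type*} [Fintype ι] {C : Finset ι} {ε : ℝ} {p : ι → ℝ}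

def clippedSimplex (C : Finset ι) (ε : ℝ) : Set (ι → ℝ) :=
  {p | p ∈ stdSimplex ℝ ι ∧ (∀ i ∈ C, ε ≤ p i) ∧ ∀ i ∉ C, p i = 0}

lemma convex_clippedSimplex : Convex ℝ (clippedSimplex C ε) := by
  rintro x ⟨hx, hxC, hx0⟩ y ⟨hy, hyC, hy0⟩ a b ha hb hab
  refine ⟨convex_stdSimplex ℝ ι hx hy ha hb hab, fun i hi => ?_, fun i hi => ?_⟩
  · simp only [Pi.add_apply, Pi.smul_apply, smul_eq_mul]
    have hε : a * ε + b * ε = ε := by rw [← add_mul, hab, one_mul]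
    linarith [mul_le_mul_of_nonneg_left (hxC i hi) ha, mul_le_mul_of_nonneg_left (hyC i hi) hb]
  · simp [hx0 i hi, hy0 i hi]

lemma clippedSimplex_anti {ε' : ℝ} (h : ε ≤ ε') : clippedSimplex C ε' ⊆ clippedSimplex C ε :=
  fun _ ⟨hp, hpC, hp0⟩ => ⟨hp, fun i hi => h.trans (hpC i hi), hp0⟩

lemma pos_of_mem_clippedSimplex (hε : 0 < ε) (hp : p ∈ clippedSimplex C ε) {i : ι} (hi : i ∈ C) :
    0 < p i :=
  hε.trans_le (hp.2.1 i hi)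

lemma sum_mul_eq_of_mem_clippedSimplex (hp : p ∈ clippedSimplex C ε) (f : ι → ℝ) :
    ∑ i, p i * f i = ∑ i ∈ C, p i * f i :=
  (sum_subset (subset_univ C) fun i _ hi => by rw [hp.2.2 i hi, zero_mul]).symm

lemma sum_eq_one_of_mem_clippedSimplex (hp : p ∈ clippedSimplex C ε) : ∑ i ∈ C, p i = 1 :=
  (sum_subset (subset_univ C) fun i _ hi => hp.2.2 i hi).trans hp.1.2

lemma sum_mul_sq_le_mul_sum_mul (hp : p ∈ clippedSimplex C ε) {ℓ : ι → ℝ} {ρ : ℝ}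
    (hℓ : ∀ i, 0 ≤ ℓ i) (hρ : ∀ i ∈ C, ℓ i ≤ ρ) : ∑ i, p i * ℓ i ^ 2 ≤ ρ * ∑ i, p i * ℓ i := by
  rw [sum_mul_eq_of_mem_clippedSimplex hp, sum_mul_eq_of_mem_clippedSimplex hp, mul_sum]
  refine sum_le_sum fun i hi => ?_
  nlinarith [mul_le_mul_of_nonneg_left (hρ i hi) (mul_nonneg (hp.1.1 i) (hℓ i))]

variable [DecidableEq ι]

lemma uniform_mem_clippedSimplex (hC : C.Nonempty) (hε : ε ≤ 1 / C.card) :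
    (fun i => if i ∈ C then (C.card : ℝ)⁻¹ else 0) ∈ clippedSimplex C ε := by
  have hC0 : (C.card : ℝ) ≠ 0 := Nat.cast_ne_zero.2 (card_ne_zero.2 hC)
  refine ⟨⟨fun i => by positivity, by simp [sum_ite_mem, hC0]⟩, fun i hi => ?_, fun i hi => ?_⟩
  · simpa [hi] using hε
  · simp [hi]

/-- `(1 - θ) e_i + θ · unif(C)`: a stand-in for `e_i`, which is not in `clippedSimplex C ε`
when `ε > 0` and `C ≠ {i}`. -/
noncomputable def smoothedDirac (C : Finset ι) (θ : ℝ) (i : ι) : ι → ℝ :=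
  fun j => (if j = i then 1 - θ else 0) + if j ∈ C then θ / C.card else 0

lemma smoothedDirac_mem_clippedSimplex {θ : ℝ} {i : ι} (hi : i ∈ C) (hθ0 : 0 ≤ θ) (hθ1 : θ ≤ 1) :
    smoothedDirac C θ i ∈ clippedSimplex C (θ / C.card) := by
  have hC : (C.card : ℝ) ≠ 0 := Nat.cast_ne_zero.2 (card_ne_zero_of_mem hi)
  refine ⟨⟨fun j => ?_, ?_⟩, fun j hj => ?_, fun j hj => ?_⟩
  · unfold smoothedDirac; split_ifs <;> positivity
  · simp [smoothedDirac, sum_add_distrib, sum_ite_mem, mul_div_cancel₀ _ hC]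
  · simp only [smoothedDirac, hj, if_true]; split_ifs <;> linarith
  · simp [smoothedDirac, hj, show j ≠ i from fun h => hj (h ▸ hi)]

lemma sum_smoothedDirac_mul_le {θ ρ : ℝ} {i : ι} (hi : i ∈ C) (hθ : 0 ≤ θ) {ℓ : ι → ℝ}
    (hℓi : 0 ≤ ℓ i) (hℓ : ∀ j ∈ C, ℓ j ≤ ρ) : ∑ j, smoothedDirac C θ i j * ℓ j ≤ ℓ i + θ * ρ := by
  have hC : (0 : ℝ) < C.card := Nat.cast_pos.2 (card_pos.2 ⟨i, hi⟩)
  have hsum : ∑ j ∈ C, ℓ j ≤ C.card * ρ := by simpa using sum_le_card_nsmul C ℓ ρ hℓ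
  simp only [smoothedDirac, add_mul, ite_mul, zero_mul, sum_add_distrib, sum_ite_eq',
    mem_univ, if_true, sum_ite_mem, univ_inter, ← mul_sum]
  calc (1 - θ) * ℓ i + θ / C.card * ∑ j ∈ C, ℓ j ≤ ℓ i + θ / C.card * (C.card * ρ) := by
        gcongr; nlinarith
    _ = ℓ i + θ * ρ := by field_simp

lemma smoothedDirac_one_div_mem_clippedSimplex {T : ℕ} (hT : 1 ≤ T) {i : ι} (hi : i ∈ C) :
    smoothedDirac C (1 / T) i ∈ clippedSimplex C (1 / (C.card * T)) := by
  have hT1 : (1 : ℝ) ≤ T := by exact_mod_cast hT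
  convert smoothedDirac_mem_clippedSimplex hi (by positivity)
    (div_le_one_of_le₀ hT1 (by positivity)) using 2
  rw [div_div, mul_comm]

lemma sum_sub_le_sum_sub_sum_smoothedDirac_mul_add {T : ℕ} (hT : 1 ≤ T) {i : ι} (hi : i ∈ C)
    {ℓ : ℕ → ι → ℝ} {ρ : ℝ} (hℓ : ∀ t ∈ Icc 1 T, 0 ≤ ℓ t i)
    (hρ : ∀ t ∈ Icc 1 T, ∀ j ∈ C, ℓ t j ≤ ρ) (x : ℕ → ℝ) :
    ∑ t ∈ Icc 1 T, (x t - ℓ t i)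
      ≤ ∑ t ∈ Icc 1 T, (x t - ∑ j, smoothedDirac C (1 / T) i j * ℓ t j) + ρ := by
  have hθ : ∑ t ∈ Icc 1 T, 1 / (T : ℝ) * ρ = ρ := by
    have : (T : ℝ) ≠ 0 := by positivity
    rw [sum_const, Nat.card_Icc, Nat.add_sub_cancel, nsmul_eq_mul]; field_simp
  rw [← hθ, ← sum_add_distrib]
  exact sum_le_sum fun t ht => by
    linarith [sum_smoothedDirac_mul_le hi (θ := 1 / T) (by positivity) (hℓ t ht) (hρ t ht)]

end ClippedSimplex

section EntropicMirrorDescent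

lemma hasFDerivAt_sum_mul_log {ι : Type*} [Fintype ι] (s : Finset ι) {y : ι → ℝ}
    (hy : ∀ i ∈ s, y i ≠ 0) :
    HasFDerivAt (fun q : ι → ℝ => ∑ i ∈ s, q i * log (q i))
      (∑ i ∈ s, (log (y i) + 1) • (ContinuousLinearMap.proj i : (ι → ℝ) →L[ℝ] ℝ)) y :=
  HasFDerivAt.fun_sum fun i hi =>
    (hasDerivAt_mul_log (hy i hi)).comp_hasFDerivAt (f := fun q : ι → ℝ => q i) y
      (hasFDerivAt_apply i y)

variable {K : ℕ}

lemma hasFDerivAt_breg_left {ψ : (Fin K → ℝ) → ℝ} {ψ' : (Fin K → ℝ) →L[ℝ] ℝ} {x : Fin K → ℝ}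
    (y : Fin K → ℝ) (h : HasFDerivAt ψ ψ' x) :
    HasFDerivAt (fun q => breg ψ q y) (ψ' - fderiv ℝ ψ y) x := by
  have e : (fun q => breg ψ q y) = fun q => ψ q - ψ y - (fderiv ℝ ψ y q - fderiv ℝ ψ y y) := by
    funext q; rw [breg, map_sub]
  rw [e]
  exact (h.sub_const _).sub ((fderiv ℝ ψ y).hasFDerivAt.sub_const _)

lemma sum_mul_sub_sum_mul_le_of_isMinOn {C : Finset (Fin K)} {Ω : Set (Fin K → ℝ)}
    (hΩ : Convex ℝ Ω) {c : ℝ} {ℓ x y q : Fin K → ℝ} (hx : x ∈ Ω) (hq : q ∈ Ω)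
    (hxC : ∀ i ∈ C, 0 < x i) (hyC : ∀ i ∈ C, 0 < y i)
    (hmin : IsMinOn (fun z => ∑ i, z i * ℓ i
      + breg (fun z => c * ∑ i ∈ C, z i * log (z i)) z y) Ω x) :
    ∑ i, x i * ℓ i - ∑ i, q i * ℓ i ≤ c * ∑ i ∈ C, (q i - x i) * (log (x i) - log (y i)) := by
  have hψ : ∀ z : Fin K → ℝ, (∀ i ∈ C, 0 < z i) →
      HasFDerivAt (fun z => c * ∑ i ∈ C, z i * log (z i))
        (c • ∑ i ∈ C, (log (z i) + 1) • ContinuousLinearMap.proj i) z := fun z hz =>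
    (hasFDerivAt_sum_mul_log C fun i hi => (hz i hi).ne').const_mul c
  have hlin : HasFDerivAt (fun z : Fin K → ℝ => ∑ i, z i * ℓ i)
      (∑ i, ℓ i • ContinuousLinearMap.proj i) x :=
    HasFDerivAt.fun_sum fun i _ =>
      (hasFDerivAt_apply (𝕜 := ℝ) (F' := fun _ => ℝ) i x).mul_const (ℓ i)
  have hF := hlin.add (hasFDerivAt_breg_left y (hψ x hxC))
  rw [(hψ y hyC).fderiv] at hF
  have h0 := hmin.localize.hasFDerivWithinAt_nonneg hF.hasFDerivWithinAt
    (sub_mem_posTangentConeAt_of_segment_subset (hΩ.segment_subset hx hq))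
  simp only [add_apply, _root_.sum_apply, smul_apply, ContinuousLinearMap.proj_apply, Pi.sub_apply,
    smul_eq_mul, sub_apply] at h0
  have e1 : ∑ i, ℓ i * (q i - x i) = ∑ i, q i * ℓ i - ∑ i, x i * ℓ i := by
    rw [← sum_sub_distrib]; exact sum_congr rfl fun i _ => by ring
  have e2 : c * ∑ i ∈ C, (log (x i) + 1) * (q i - x i) - c * ∑ i ∈ C, (log (y i) + 1) * (q i - x i)
      = c * ∑ i ∈ C, (q i - x i) * (log (x i) - log (y i)) := by
    rw [← mul_sub, ← sum_sub_distrib]; exact congrArg _ (sum_congr rfl fun i _ => by ring)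
  linarith

lemma entropic_step_le {C : Finset (Fin K)} {ε η : ℝ} (hε : 0 < ε) (hη : 0 < η)
    {ℓ x y q : Fin K → ℝ} (hℓ : ∀ i, 0 ≤ ℓ i) (hx : x ∈ clippedSimplex C ε)
    (hy : y ∈ clippedSimplex C ε) (hq : q ∈ clippedSimplex C ε)
    (hmin : IsMinOn (fun z => ∑ i, z i * ℓ i
      + breg (fun z => 1 / η * ∑ i ∈ C, z i * log (z i)) z y) (clippedSimplex C ε) x) :
    ∑ i, y i * ℓ i - ∑ i, q i * ℓ i
      ≤ (relEntropy C q y - relEntropy C q x) / η + η / 2 * ∑ i, y i * ℓ i ^ 2 := by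
  have pos {z} (hz : z ∈ clippedSimplex C ε) := fun i (hi : i ∈ C) =>
    pos_of_mem_clippedSimplex hε hz hi
  have hopt := sum_mul_sub_sum_mul_le_of_isMinOn convex_clippedSimplex hx hq (pos hx) (pos hy) hmin
  rw [← relEntropy_sub_relEntropy_sub_relEntropy (pos hq) (pos hx) (pos hy)] at hopt
  have hloc := sum_mul_sub_sum_mul_le_relEntropy_div_add hη (fun i _ => hℓ i) (pos hx) (pos hy)
    (sum_eq_one_of_mem_clippedSimplex hx) (sum_eq_one_of_mem_clippedSimplex hy)
  rw [← sum_mul_eq_of_mem_clippedSimplex hy, ← sum_mul_eq_of_mem_clippedSimplex hx,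
    ← sum_mul_eq_of_mem_clippedSimplex hy (fun i => ℓ i ^ 2)] at hloc
  linear_combination hopt + hloc

end EntropicMirrorDescent

theorem regret_le_of_entropic_mirror_descent {K T : ℕ} (hT : 1 ≤ T) {C : Finset (Fin K)} {ε : ℝ}
    (hε : 0 < ε) {p ℓ : ℕ → Fin K → ℝ} {η : ℕ → ℝ} {q : Fin K → ℝ}
    (hq : q ∈ clippedSimplex C ε) (hℓ : ∀ t ∈ Icc 1 T, ∀ i, 0 ≤ ℓ t i)
    (hp : ∀ t ∈ Icc 1 (T + 1), p t ∈ clippedSimplex C ε)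
    (hη : ∀ t, η t = 1 / √(1 + ∑ τ ∈ Icc 1 t, ∑ i, p τ i * ℓ τ i ^ 2))
    (hmin : ∀ t ∈ Icc 1 T, IsMinOn (fun z => ∑ i, z i * ℓ t i
      + breg (fun z => 1 / η t * ∑ i ∈ C, z i * log (z i)) z (p t))
      (clippedSimplex C ε) (p (t + 1))) :
    ∑ t ∈ Icc 1 T, (∑ i, p t i * ℓ t i - ∑ i, q i * ℓ t i)
      ≤ (log ε⁻¹ + 1) * √(1 + ∑ t ∈ Icc 1 T, ∑ i, p t i * ℓ t i ^ 2) := by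
  have pos {z} (hz : z ∈ clippedSimplex C ε) := fun i (hi : i ∈ C) =>
    pos_of_mem_clippedSimplex hε hz hi
  have hpT : ∀ t ∈ Icc 1 T, p t ∈ clippedSimplex C ε := fun t ht =>
    hp t (Icc_subset_Icc_right (Nat.le_succ T) ht)
  have ha : ∀ t ∈ Icc 1 T, 0 ≤ ∑ i, p t i * ℓ t i ^ 2 := fun t ht =>
    sum_nonneg fun i _ => mul_nonneg ((hpT t ht).1.1 i) (sq_nonneg _)
  refine sum_le_of_adaptive_rate (D := fun t => relEntropy C q (p t)) hT ha
    (fun t ht => ⟨?_, ?_⟩) hη fun t ht => ?_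
  · exact relEntropy_nonneg (pos hq) (pos (hp t ht)) (sum_eq_one_of_mem_clippedSimplex hq)
      (sum_eq_one_of_mem_clippedSimplex (hp t ht))
  · exact relEntropy_le_log_inv hε (pos hq) (sum_eq_one_of_mem_clippedSimplex hq) (hp t ht).2.1
  · have hA : 0 ≤ ∑ τ ∈ Icc 1 t, ∑ i, p τ i * ℓ τ i ^ 2 := sum_nonneg fun τ hτ =>
      ha τ (Icc_subset_Icc_right (mem_Icc.1 ht).2 hτ)
    have hηt : 0 < η t := by rw [hη]; positivity
    exact entropic_step_le hε hηt (hℓ t ht) (hp (t + 1) (by simp at ht ⊢; omega)) (hpT t ht) hq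
      (hmin t ht)

theorem stmt8_general (K T : ℕ) (hK : 2 ≤ K) (hT : 1 ≤ T)
    (C : Finset (Fin K))
    (Ω : Set (Fin K → ℝ))
    (hΩ : Ω = {p | p ∈ stdSimplex ℝ (Fin K) ∧
      (∀ i ∈ C, 1 / ((C.card : ℝ) * T) ≤ p i) ∧ ∀ i ∉ C, p i = 0})
    (p ℓ : ℕ → Fin K → ℝ) (η : ℕ → ℝ) (ψ : ℕ → (Fin K → ℝ) → ℝ)
    (hp1 : ∀ i, p 1 i = if i ∈ C then ((C.card : ℝ))⁻¹ else 0)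
    (hℓ0 : ∀ t ∈ Finset.Icc 1 T, ∀ i, 0 ≤ ℓ t i)
    (hη : ∀ t, η t = 1 / Real.sqrt (1 + ∑ τ ∈ Finset.Icc 1 t, ∑ i, p τ i * ℓ τ i ^ 2))
    (hψ : ∀ t, ψ t = fun q => (1 / η t) * ∑ i ∈ C, q i * Real.log (q i))
    (hupd : ∀ t ∈ Finset.Icc 1 T, p (t + 1) ∈ Ω ∧ ∀ q ∈ Ω,
      (∑ i, p (t + 1) i * ℓ t i) + breg (ψ t) (p (t + 1)) (p t)
        ≤ (∑ i, q i * ℓ t i) + breg (ψ t) q (p t))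
    (ρ : ℝ)
    (hρ : ρ = max 1 (sSup {x : ℝ | ∃ t ∈ Finset.Icc 1 T, ∃ i ∈ C, x = ℓ t i})) :
    ∀ i ∈ C,
      ∑ t ∈ Finset.Icc 1 T, (∑ j, p t j * ℓ t j - ℓ t i) ≤
        25 * ρ * Real.log ((K : ℝ) * T) ^ 2
          + 10 * Real.log ((K : ℝ) * T) *
            Real.sqrt (ρ * ∑ t ∈ Finset.Icc 1 T, ℓ t i) := by
  intro i hi
  subst hΩ
  have hC : (1 : ℝ) ≤ C.card := by exact_mod_cast card_pos.2 ⟨i, hi⟩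
  have hT1 : (1 : ℝ) ≤ T := by exact_mod_cast hT
  have hCT : 1 ≤ (C.card : ℝ) * T := one_le_mul_of_one_le_of_one_le hC hT1
  have hp : ∀ t ∈ Icc 1 (T + 1), p t ∈ clippedSimplex C (1 / (C.card * T)) :=
    forall_mem_Icc_one_add_one (funext hp1 ▸ uniform_mem_clippedSimplex ⟨i, hi⟩
      (one_div_le_one_div_of_le (by positivity) (le_mul_of_one_le_right (by positivity) hT1)))
      fun t ht => (hupd t ht).1
  have hreg := regret_le_of_entropic_mirror_descent hT (by positivity)
    (smoothedDirac_one_div_mem_clippedSimplex hT hi) hℓ0 hp hη fun t ht =>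
      isMinOn_iff.2 fun z hz => by simpa only [hψ] using (hupd t ht).2 z hz
  rw [inv_div, div_one] at hreg
  have hρℓ : ∀ t ∈ Icc 1 T, ∀ j ∈ C, ℓ t j ≤ ρ := fun t ht j hj =>
    hρ ▸ (le_sSup_of_mem_finset ℓ ht hj).trans (le_max_right _ _)
  have hcomp := sum_sub_le_sum_sub_sum_smoothedDirac_mul_add hT hi (fun t ht => hℓ0 t ht i) hρℓ
    fun t => ∑ j, p t j * ℓ t j
  have hlocal : ∑ t ∈ Icc 1 T, ∑ j, p t j * ℓ t j ^ 2 ≤ ρ * ∑ t ∈ Icc 1 T, ∑ j, p t j * ℓ t j :=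
    mul_sum (Icc 1 T) _ ρ ▸ sum_le_sum fun t ht => sum_mul_sq_le_mul_sum_mul
      (hp t (Icc_subset_Icc_right (Nat.le_succ T) ht)) (hℓ0 t ht) (hρℓ t ht)
  have hRL : ∑ t ∈ Icc 1 T, (∑ j, p t j * ℓ t j - ℓ t i) + ∑ t ∈ Icc 1 T, ℓ t i
      = ∑ t ∈ Icc 1 T, ∑ j, p t j * ℓ t j := by
    rw [sum_sub_distrib, sub_add_cancel]
  have hCK : (C.card : ℝ) ≤ K := by exact_mod_cast (card_le_univ C).trans_eq (Fintype.card_fin K)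
  refine le_of_le_add_one_mul_sqrt_add (sum_nonneg fun t ht => hℓ0 t ht i) (hρ ▸ le_max_left _ _)
    (log_nonneg hCT) (log_le_log (by positivity) (by gcongr))
    (two_div_three_le_log (by nlinarith [show (2 : ℝ) ≤ K by exact_mod_cast hK])) ?_
  calc _ ≤ _ := hcomp
    _ ≤ (log (C.card * T) + 1) * √(1 + ∑ t ∈ Icc 1 T, ∑ j, p t j * ℓ t j ^ 2) + ρ := by linarith
    _ ≤ _ := by rw [hRL]; gcongr; linarith [log_nonneg hCT]

/-- Regret guarantee for Hedge with adaptive learning rates (Lemma 4 /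
Algorithm 3 of the paper) over an active set `C` of experts. -/
theorem stmt8 (K T : ℕ) (hK : 2 ≤ K) (hT : 1 ≤ T)
    (C : Finset (Fin K)) (hC : C.Nonempty)
    (Ω : Set (Fin K → ℝ))
    (hΩ : Ω = {p | p ∈ stdSimplex ℝ (Fin K) ∧
      (∀ i ∈ C, 1 / ((C.card : ℝ) * T) ≤ p i) ∧ ∀ i ∉ C, p i = 0})
    (p ℓ : ℕ → Fin K → ℝ) (η : ℕ → ℝ) (ψ : ℕ → (Fin K → ℝ) → ℝ)
    (hp1 : ∀ i, p 1 i = if i ∈ C then ((C.card : ℝ))⁻¹ else 0)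
    (hℓ0 : ∀ t ∈ Finset.Icc 1 T, ∀ i, 0 ≤ ℓ t i)
    (hη : ∀ t, η t = 1 / Real.sqrt (1 + ∑ τ ∈ Finset.Icc 1 t, ∑ i, p τ i * ℓ τ i ^ 2))
    (hψ : ∀ t, ψ t = fun q => (1 / η t) * ∑ i ∈ C, q i * Real.log (q i))
    (hupd : ∀ t ∈ Finset.Icc 1 T, p (t + 1) ∈ Ω ∧ ∀ q ∈ Ω,
      (∑ i, p (t + 1) i * ℓ t i) + breg (ψ t) (p (t + 1)) (p t)
        ≤ (∑ i, q i * ℓ t i) + breg (ψ t) q (p t))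
    (ρ : ℝ)
    (hρ : ρ = max 1 (sSup {x : ℝ | ∃ t ∈ Finset.Icc 1 T, ∃ i ∈ C, x = ℓ t i})) :
    ∀ i ∈ C,
      ∑ t ∈ Finset.Icc 1 T, (∑ j, p t j * ℓ t j - ℓ t i) ≤
        25 * ρ * Real.log ((K : ℝ) * T) ^ 2
          + 10 * Real.log ((K : ℝ) * T) *
            Real.sqrt (ρ * ∑ t ∈ Finset.Icc 1 T, ℓ t i) :=
  stmt8_general K T hK hT C Ω hΩ p ℓ η ψ hp1 hℓ0 hη hψ hupd ρ hρ
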